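/- Fix δ ∈ (0,1) and assume that for every N the weights (p_k^{(N,δ)})_{k≥0} sum to 1. Define the median M_N := min{ k ∈ ℕ : Σ_{ℓ=0}^{k} p_ℓ^{(N,δ)} ≥ 1/2 }. Then, as N → ∞, M_N ~ log( log(N^δ)/log 2 ) / log 2, i.e. M_N · log 2 / log( δ (log N) / log 2 ) → 1. -/

import Mathlib

/-! The partial sums `w_k = Σ_{ℓ ≤ k} p_ℓ` satisfy `ρ p_k = w_k (1 - w_k)` (the equilibrium
equation summed over `ℓ ≤ k`), i.e. `w_{k+1}² = μ w_{k+1} + ρ w_k` with `μ = 1 - ρ = N^{-δ}`.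
Iterating this doubling recursion gives `ρ μ^{2^{-k}} ≤ w_k ≤ 4 μ^{2^{-k}}`, and
`μ^{2^{-k}} = exp (-δ log N / 2^k)` passes `1/2` when `2^k` is comparable to `δ log N`. Hence the
median stays within distance 3 of `log₂ (δ log N)`, which gives the asymptotics. -/

open Filter Finset

namespace MullerRatchet12

/-- Auxiliary recursion computing the pair `(p_k, Σ_{ℓ≤k} p_ℓ)` of the equilibrium
type-frequency weights of the tournament ratchet. -/
noncomputable def pAux (ρ : ℝ) : ℕ → ℝ × ℝ
  | 0 => (1 - ρ, 1 - ρ)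
  | k+1 =>
    let a := ρ - 1 + 2 * (pAux ρ k).2
    let p := -(1/2) * a + Real.sqrt ((1/4) * a^2 + ρ * (pAux ρ k).1)
    (p, (pAux ρ k).2 + p)

/-- The equilibrium weight `p_k^{(ρ)}`. -/
noncomputable def pseq (ρ : ℝ) (k : ℕ) : ℝ := (pAux ρ k).1

/-- The median `M_N = min{k : Σ_{ℓ=0}^k p_ℓ^{(N,δ)} ≥ 1/2}` of the equilibrium profile. -/
noncomputable def median (δ : ℝ) (N : ℕ) : ℕ :=
  sInf {k : ℕ | 1/2 ≤ ∑ l ∈ Finset.range (k+1), pseq (1 - (N:ℝ)^(-δ)) l}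

open Asymptotics Real

noncomputable def cdf (ρ : ℝ) (k : ℕ) : ℝ := ∑ l ∈ range (k + 1), pseq ρ l

lemma median_eq (δ : ℝ) (N : ℕ) :
    median δ N = sInf {k | 1/2 ≤ cdf (1 - (N:ℝ)^(-δ)) k} := rfl

lemma pseq_zero (ρ : ℝ) : pseq ρ 0 = 1 - ρ := rfl

lemma cdf_zero (ρ : ℝ) : cdf ρ 0 = 1 - ρ := by simp [cdf, pseq_zero]

lemma cdf_succ (ρ : ℝ) (k : ℕ) : cdf ρ (k + 1) = cdf ρ k + pseq ρ (k + 1) := sum_range_succ _ _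

lemma cdf_eq_pAux_snd (ρ : ℝ) (k : ℕ) : cdf ρ k = (pAux ρ k).2 := by
  induction k with
  | zero => rw [cdf_zero]; rfl
  | succ k ih => rw [cdf_succ, ih]; rfl

lemma pseq_succ (ρ : ℝ) (k : ℕ) : pseq ρ (k + 1) = -(1/2) * (ρ - 1 + 2 * cdf ρ k)
    + √((1/4) * (ρ - 1 + 2 * cdf ρ k)^2 + ρ * pseq ρ k) := by
  rw [cdf_eq_pAux_snd]; rfl

lemma neg_half_mul_add_sqrt_nonneg (a : ℝ) {c : ℝ} (hc : 0 ≤ c) :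
    0 ≤ -(1/2) * a + √((1/4) * a^2 + c) := by
  have : |a / 2| ≤ √((1/4) * a^2 + c) := abs_le_sqrt (by nlinarith)
  linarith [le_abs_self (a / 2)]

lemma sq_add_mul_neg_half_mul_add_sqrt (a : ℝ) {c : ℝ} (hc : 0 ≤ c) :
    (-(1/2) * a + √((1/4) * a^2 + c))^2 + a * (-(1/2) * a + √((1/4) * a^2 + c)) = c := by
  linear_combination sq_sqrt (by positivity : 0 ≤ (1/4) * a^2 + c)

lemma exp_div_two_pow_succ_sq (a : ℝ) (k : ℕ) : exp (a / 2^(k+1))^2 = exp (a / 2^k) := by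
  rw [sq, ← exp_add]; congr 1; rw [pow_succ]; ring

lemma exp_neg_eight_le : exp (-8) ≤ 1/9 := by
  rw [le_div_iff₀ (by norm_num)]
  calc exp (-8) * 9 ≤ exp (-8) * exp 8 := by gcongr; linarith [add_one_le_exp 8]
    _ = 1 := by rw [← exp_add]; norm_num

lemma isEquivalent_of_abs_sub_le {α : Type*} {l : Filter α} {u v : α → ℝ} {C : ℝ}
    (hv : Tendsto v l atTop) (h : ∀ᶠ x in l, |u x - v x| ≤ C) : u ~[l] v :=
  (IsBigO.of_bound (g := fun _ => (1:ℝ)) C (h.mono fun x hx => by simpa using hx)).trans_isLittleO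
    ((isLittleO_one_left_iff ℝ).2 (tendsto_norm_atTop_atTop.comp hv))

section

variable {ρ : ℝ}

lemma pseq_nonneg (hρ0 : 0 ≤ ρ) (hρ1 : ρ ≤ 1) (k : ℕ) : 0 ≤ pseq ρ k := by
  induction k with
  | zero => rw [pseq_zero]; linarith
  | succ k ih => rw [pseq_succ]; exact neg_half_mul_add_sqrt_nonneg _ (mul_nonneg hρ0 ih)

lemma pseq_succ_sq_add (hρ0 : 0 ≤ ρ) (hρ1 : ρ ≤ 1) (k : ℕ) :
    pseq ρ (k+1)^2 + (ρ - 1 + 2 * cdf ρ k) * pseq ρ (k+1) = ρ * pseq ρ k := by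
  rw [pseq_succ]
  exact sq_add_mul_neg_half_mul_add_sqrt _ (mul_nonneg hρ0 (pseq_nonneg hρ0 hρ1 k))

lemma mul_pseq_eq (hρ0 : 0 ≤ ρ) (hρ1 : ρ ≤ 1) (k : ℕ) :
    ρ * pseq ρ k = cdf ρ k * (1 - cdf ρ k) := by
  induction k with
  | zero => rw [pseq_zero, cdf_zero]; ring
  | succ k ih => rw [cdf_succ]; linear_combination pseq_succ_sq_add hρ0 hρ1 k + ih

lemma cdf_succ_sq (hρ0 : 0 ≤ ρ) (hρ1 : ρ ≤ 1) (k : ℕ) :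
    cdf ρ (k+1)^2 = (1 - ρ) * cdf ρ (k+1) + ρ * cdf ρ k := by
  linear_combination mul_pseq_eq hρ0 hρ1 (k+1) + ρ * cdf_succ ρ k

lemma cdf_mono (hρ0 : 0 ≤ ρ) (hρ1 : ρ ≤ 1) : Monotone (cdf ρ) :=
  monotone_nat_of_le_succ fun k => by rw [cdf_succ]; linarith [pseq_nonneg hρ0 hρ1 (k+1)]

lemma one_sub_le_cdf (hρ0 : 0 ≤ ρ) (hρ1 : ρ ≤ 1) (k : ℕ) : 1 - ρ ≤ cdf ρ k :=
  cdf_zero ρ ▸ cdf_mono hρ0 hρ1 k.zero_le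

lemma mul_exp_le_cdf (hρ0 : 0 ≤ ρ) (hρ1 : ρ < 1) (k : ℕ) :
    ρ * exp (log (1 - ρ) / 2^k) ≤ cdf ρ k := by
  induction k with
  | zero => rw [pow_zero, div_one, exp_log (by linarith), cdf_zero]; nlinarith
  | succ k ih =>
    have hw : 0 ≤ cdf ρ (k+1) := by linarith [one_sub_le_cdf hρ0 hρ1.le (k+1)]
    refine (sq_le_sq₀ (by positivity) hw).1 ?_
    calc (ρ * exp (log (1 - ρ) / 2^(k+1)))^2 = ρ * (ρ * exp (log (1 - ρ) / 2^k)) := by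
          rw [mul_pow, exp_div_two_pow_succ_sq]; ring
      _ ≤ ρ * cdf ρ k := mul_le_mul_of_nonneg_left ih hρ0
      _ ≤ cdf ρ (k+1)^2 := by
          rw [cdf_succ_sq hρ0 hρ1.le]; nlinarith [mul_nonneg (sub_nonneg.2 hρ1.le) hw]

lemma cdf_le_four_mul_exp (hρ0 : 0 ≤ ρ) (hρ1 : ρ < 1) (k : ℕ) :
    cdf ρ k ≤ 4 * exp (log (1 - ρ) / 2^k) := by
  have hμ : 0 < 1 - ρ := by linarith
  induction k with
  | zero => rw [pow_zero, div_one, exp_log hμ, cdf_zero]; linarith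
  | succ k ih =>
    set v := exp (log (1 - ρ) / 2^(k+1))
    have hμv : 1 - ρ ≤ v := by
      have h := div_le_self (neg_nonneg.2 (log_nonpos hμ.le (by linarith)))
        (one_le_pow₀ one_le_two : (1:ℝ) ≤ 2^(k+1))
      rw [neg_div] at h
      calc 1 - ρ = exp (log (1 - ρ)) := (exp_log hμ).symm
        _ ≤ v := exp_le_exp.2 (by linarith)
    -- `cdf_succ_sq` says `(w - μ)² = ρ W - μ (w - μ)` for `w = cdf ρ (k+1)`, `W = cdf ρ k`,
    -- `μ = 1 - ρ`
    have hstep : (cdf ρ (k+1) - (1 - ρ))^2 ≤ (2 * v)^2 :=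
      calc (cdf ρ (k+1) - (1 - ρ))^2 ≤ cdf ρ k := by
            nlinarith [cdf_succ_sq hρ0 hρ1.le k, one_sub_le_cdf hρ0 hρ1.le k,
              mul_nonneg hμ.le (sub_nonneg.2 (one_sub_le_cdf hρ0 hρ1.le (k+1)))]
        _ ≤ 4 * exp (log (1 - ρ) / 2^k) := ih
        _ = (2 * v)^2 := by rw [mul_pow, exp_div_two_pow_succ_sq]; norm_num
    linarith [(abs_le_of_sq_le_sq' hstep (by positivity)).2]

lemma half_le_cdf_of_four_mul_le (hρ : 3/4 ≤ ρ) (hρ1 : ρ < 1) {k : ℕ}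
    (hk : 4 * -log (1 - ρ) ≤ 2^k) : 1/2 ≤ cdf ρ k := by
  have hexp : 3/4 ≤ exp (log (1 - ρ) / 2^k) := by
    have : -(1/4) ≤ log (1 - ρ) / 2^k := by rw [le_div_iff₀ (by positivity)]; linarith
    linarith [add_one_le_exp (log (1 - ρ) / 2^k)]
  nlinarith [mul_exp_le_cdf (by linarith) hρ1 k]

lemma cdf_lt_half_of_eight_mul_le (hρ0 : 0 ≤ ρ) (hρ1 : ρ < 1) {k : ℕ}
    (hk : 8 * 2^k ≤ -log (1 - ρ)) : cdf ρ k < 1/2 := by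
  have : log (1 - ρ) / 2^k ≤ -8 := by rw [div_le_iff₀ (by positivity)]; linarith
  linarith [cdf_le_four_mul_exp hρ0 hρ1 k, exp_le_exp.2 this, exp_neg_eight_le]

lemma abs_sInf_sub_logb_le (hρ1 : ρ < 1) (hL : 8 ≤ -log (1 - ρ)) :
    |((sInf {k : ℕ | 1/2 ≤ cdf ρ k} : ℕ) : ℝ) - logb 2 (-log (1 - ρ))| ≤ 3 := by
  set S := {k : ℕ | 1/2 ≤ cdf ρ k}
  set L := -log (1 - ρ)
  set x := logb 2 L
  have hL0 : 0 < L := by linarith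
  have hρ : 3/4 ≤ ρ := by
    have : 1 - ρ ≤ exp (-8) := by
      rw [← exp_log (by linarith : 0 < 1 - ρ)]; exact exp_le_exp.2 (by linarith)
    linarith [exp_neg_eight_le]
  have hx : 3 ≤ x := (le_logb_iff_rpow_le one_lt_two hL0).2 (by norm_num; linarith)
  have hfloor : 3 ≤ ⌊x⌋₊ := Nat.le_floor (by exact_mod_cast hx)
  have hmem : ⌈x⌉₊ + 2 ∈ S := by
    refine half_le_cdf_of_four_mul_le hρ hρ1 ?_
    have : L ≤ 2^⌈x⌉₊ := by
      rw [← rpow_natCast]; exact (logb_le_iff_le_rpow one_lt_two hL0).1 (Nat.le_ceil x)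
    rw [pow_add]; linarith
  have hlower : ⌊x⌋₊ - 3 < sInf S := by
    refine lt_of_not_ge fun h =>
      (show 1/2 ≤ cdf ρ (sInf S) from Nat.sInf_mem ⟨_, hmem⟩).not_gt ?_
    refine (cdf_mono (by linarith) hρ1.le h).trans_lt
      (cdf_lt_half_of_eight_mul_le (by linarith) hρ1 ?_)
    have : (2:ℝ)^⌊x⌋₊ ≤ L := by
      rw [← rpow_natCast]
      exact (le_logb_iff_rpow_le one_lt_two hL0).1 (Nat.floor_le (by linarith))
    rw [← Nat.sub_add_cancel hfloor, pow_add] at this; linarith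
  rw [abs_le]; constructor
  · have h := Nat.lt_floor_add_one x
    have : ((⌊x⌋₊ - 3 : ℕ) : ℝ) + 1 ≤ (sInf S : ℕ) := by exact_mod_cast hlower
    push_cast [Nat.cast_sub hfloor] at this; linarith
  · have h := Nat.ceil_lt_add_one (by linarith : 0 ≤ x)
    have : ((sInf S : ℕ) : ℝ) ≤ ⌈x⌉₊ + 2 := by exact_mod_cast Nat.sInf_le hmem
    linarith

end

theorem statement12_general (δ : ℝ) (hδ0 : 0 < δ) :
    Tendsto (fun N : ℕ =>
        (median δ N : ℝ) * Real.log 2 / Real.log (δ * Real.log N / Real.log 2))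
      atTop (nhds 1) := by
  have hlog2 : 0 < log 2 := log_pos one_lt_two
  have hL : Tendsto (fun N : ℕ => δ * log N) atTop atTop :=
    (tendsto_log_atTop.comp tendsto_natCast_atTop_atTop).const_mul_atTop hδ0
  have hlogL : Tendsto (fun N : ℕ => log (δ * log N)) atTop atTop := tendsto_log_atTop.comp hL
  have hmedian : (fun N : ℕ => (median δ N : ℝ) * log 2) ~[atTop] fun N => log (δ * log N) := by
    refine isEquivalent_of_abs_sub_le hlogL (C := 3 * log 2) ?_
    filter_upwards [eventually_gt_atTop 0, hL.eventually_ge_atTop 8] with N hN hL8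
    have hμ : 0 < (N : ℝ)^(-δ) := by positivity
    have hlogμ : -log (1 - (1 - (N : ℝ)^(-δ))) = δ * log N := by
      rw [sub_sub_cancel, log_rpow (by positivity)]; ring
    have h := abs_sInf_sub_logb_le (by linarith) (hlogμ ▸ hL8)
    rw [hlogμ, ← median_eq] at h
    calc |(median δ N : ℝ) * log 2 - log (δ * log N)|
        = |((median δ N : ℝ) - logb 2 (δ * log N)) * log 2| := by
          rw [sub_mul, logb, div_mul_cancel₀ _ hlog2.ne']
      _ ≤ 3 * log 2 := by rw [abs_mul, abs_of_pos hlog2]; gcongr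
  have hdenom : (fun N : ℕ => log (δ * log N / log 2)) ~[atTop] fun N => log (δ * log N) := by
    refine isEquivalent_of_abs_sub_le hlogL (C := |log (log 2)|) ?_
    filter_upwards [hL.eventually_gt_atTop 0] with N hN
    rw [log_div hN.ne' hlog2.ne', sub_sub_cancel_left, abs_neg]
  have hdenom_ne : ∀ᶠ N : ℕ in atTop, log (δ * log N / log 2) ≠ 0 :=
    (hdenom.symm.tendsto_atTop hlogL).eventually_ne_atTop 0
  exact (isEquivalent_iff_tendsto_one hdenom_ne).1 (hmedian.trans hdenom.symm)

/-- If the weights sum to 1, then the median of `p^{(N,δ)}` is asymptotically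
`log(log(N^δ)/log 2)/log 2` as `N → ∞`. -/
theorem statement12 (δ : ℝ) (hδ0 : 0 < δ) (hδ1 : δ < 1)
    (hsum : ∀ N : ℕ, 2 ≤ N → HasSum (fun k => pseq (1 - (N:ℝ)^(-δ)) k) 1) :
    Tendsto (fun N : ℕ =>
        (median δ N : ℝ) * Real.log 2 / Real.log (δ * Real.log N / Real.log 2))
      atTop (nhds 1) :=
  statement12_general δ hδ0

end MullerRatchet12
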